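/- Let t₀ > 0, α ∈ (0,1), ε > 0, and let r : [t₀,∞) → (0,∞) be a C¹ function with r′(t₀) ≤ 0. Suppose there is a sequence (tₙ)ₙ≥₁, defined inductively with t₀ as starting value by t_{2k+1} = inf{t > t_{2k} : r′(t) > 0} and t_{2k+2} = inf{t > t_{2k+1} : r(t) = r(t_{2k+1})} for k ≥ 0 (all these sets being nonempty), which is strictly increasing with tₙ → ∞, satisfies t_{2k+1} − t_{2k} ≥ ε for all k ≥ 0, and such that osc_{t∈[t_{2k+1},t_{2k+2}]} r(t) = o(t_{2k+1}^{−α−1}) as k → ∞, where osc_{t∈I} r(t) = max_{t∈I} r(t) − min_{t∈I} r(t). Let φ₀ > 0 and let φ : [t₀,∞) → [φ₀,∞) be an increasing C¹ bijection with φ(t₀) = φ₀, and suppose there exists φ̄₀ ∈ ℝ such that (φ(t) − φ̄₀) − (t − t₀) → 0 as t → ∞. Let f : [φ₀,∞) → (0,∞) be the differentiable function determined by f(φ(t)) = r(t), and assume the graph Γ′ of r = f(φ) in polar coordinates is a spiral: f(φ) → 0 as φ → ∞ and for every fixed φ ≥ φ₀ the sequence k ↦ f(φ + 2kπ) is strictly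 decreasing. Let ε′ be such that 0 < ε′ < ε and set θ = min{ε′, π}. Assume there exist positive constants m, m̄, a′, M such that for all φ ≥ φ₀: m·φ^{−α} ≤ f(φ) ≤ m̄·φ^{−α}, |f′(φ)| ≤ M·φ^{−α−1}, and a′·φ^{−α−1} ≤ f(φ) − f(φ + Δφ) for every Δφ with θ ≤ Δφ ≤ 2π + θ. Then dim_B Γ′ = 2/(1+α), i.e. the lower and upper box dimensions of Γ′ both equal 2/(1+α). -/

import Mathlib

/-!
Both box dimensions are read off from the two-sided estimate `vol(Γ'_e) ≍ e ^ (2α/(1+α))`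
as `e → 0`.

Lower bound: by the mean value theorem, beyond the angle `a ≍ e ^ (-1/(1+α))` two consecutive
windings `f ψ`, `f (ψ + 2π)` on a ray differ by less than `e`, while up to that angle
`f ≳ a ^ (-α) ≍ e ^ (α/(1+α))`. Since `f → 0`, every point of the disc of that radius lies within
`e` of a winding on its own ray.

Upper bound: `|dγ/dψ| ≲ ψ ^ (-α)`, so in the variable `u = ψ ^ (1-α)` the curve is Lipschitz; its
part with `ψ ≤ Ψ = e ^ (-1/(1+α))` is covered by `≍ Ψ ^ (1-α) / e` squares of side `≍ e`, and the
rest lies in a disc of radius `≍ Ψ ^ (-α)`. Both pieces have area `≍ e ^ (2α/(1+α))`.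
-/

open Set Filter MeasureTheory Real

noncomputable section

/-- The Euclidean ε-neighborhood `A_ε = {y : dist(y, A) < ε}` of a set `A ⊆ ℝ²`
(with the Euclidean distance). -/
def euclNbhd (A : Set (ℝ × ℝ)) (ε : ℝ) : Set (ℝ × ℝ) :=
  {y | ∃ a ∈ A, Real.sqrt ((y.1 - a.1) ^ 2 + (y.2 - a.2) ^ 2) < ε}

/-- Lower `s`-dimensional Minkowski content of a set `A ⊆ ℝ²`:
`liminf_{ε→0⁺} vol₂(A_ε) / ε^{2-s}`. -/
def lowerMinkowskiContent (A : Set (ℝ × ℝ)) (s : ℝ) : ENNReal :=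
  Filter.liminf
    (fun ε : ℝ => MeasureTheory.volume (euclNbhd A ε) / ENNReal.ofReal (ε ^ (2 - s)))
    (nhdsWithin 0 (Set.Ioi 0))

/-- Upper `s`-dimensional Minkowski content of a set `A ⊆ ℝ²`:
`limsup_{ε→0⁺} vol₂(A_ε) / ε^{2-s}`. -/
def upperMinkowskiContent (A : Set (ℝ × ℝ)) (s : ℝ) : ENNReal :=
  Filter.limsup
    (fun ε : ℝ => MeasureTheory.volume (euclNbhd A ε) / ENNReal.ofReal (ε ^ (2 - s)))
    (nhdsWithin 0 (Set.Ioi 0))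

/-- Lower box dimension: `inf {s ≥ 0 : M_*^s(A) = 0}`. -/
def lowerBoxDim (A : Set (ℝ × ℝ)) : ℝ :=
  sInf {s : ℝ | 0 ≤ s ∧ lowerMinkowskiContent A s = 0}

/-- Upper box dimension: `inf {s ≥ 0 : M^{*s}(A) = 0}`. -/
def upperBoxDim (A : Set (ℝ × ℝ)) : ℝ :=
  sInf {s : ℝ | 0 ≤ s ∧ upperMinkowskiContent A s = 0}

end

open Metric Topology

lemma tendsto_rpow_nhdsGT_zero {a : ℝ} (ha : 0 < a) :
    Tendsto (fun e : ℝ => e ^ a) (𝓝[>] 0) (𝓝 0) := by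
  simpa [Real.zero_rpow ha.ne'] using
    ((continuousAt_rpow_const 0 a (Or.inr ha.le)).tendsto).mono_left nhdsWithin_le_nhds

lemma ofReal_mul_rpow_div_ofReal_rpow {c e d s : ℝ} (he : 0 < e) :
    ENNReal.ofReal (c * e ^ (2 - d)) / ENNReal.ofReal (e ^ (2 - s)) =
      ENNReal.ofReal (c * e ^ (s - d)) := by
  rw [← ENNReal.ofReal_div_of_pos (rpow_pos_of_pos he _), mul_div_assoc, ← rpow_sub he]
  ring_nf

lemma upperMinkowskiContent_eq_zero_of_volume_le {A : Set (ℝ × ℝ)} {C d s : ℝ} (hs : d < s)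
    (hA : ∀ᶠ e in 𝓝[>] 0, volume (euclNbhd A e) ≤ ENNReal.ofReal (C * e ^ (2 - d))) :
    upperMinkowskiContent A s = 0 := by
  have hbound : ∀ᶠ e in 𝓝[>] (0 : ℝ),
      volume (euclNbhd A e) / ENNReal.ofReal (e ^ (2 - s)) ≤ ENNReal.ofReal (C * e ^ (s - d)) := by
    filter_upwards [hA, self_mem_nhdsWithin] with e hle (he : 0 < e)
    exact (ENNReal.div_le_div_right hle _).trans_eq (ofReal_mul_rpow_div_ofReal_rpow he)
  have hlim : Tendsto (fun e : ℝ => ENNReal.ofReal (C * e ^ (s - d))) (𝓝[>] 0) (𝓝 0) := by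
    simpa using ENNReal.tendsto_ofReal ((tendsto_rpow_nhdsGT_zero (sub_pos.2 hs)).const_mul C)
  exact nonpos_iff_eq_zero.1 ((limsup_le_limsup hbound).trans_eq hlim.limsup_eq)

lemma lowerMinkowskiContent_eq_top_of_le_volume {A : Set (ℝ × ℝ)} {c d s : ℝ} (hc : 0 < c)
    (hs : s < d)
    (hA : ∀ᶠ e in 𝓝[>] 0, ENNReal.ofReal (c * e ^ (2 - d)) ≤ volume (euclNbhd A e)) :
    lowerMinkowskiContent A s = ⊤ := by
  have hbound : ∀ᶠ e in 𝓝[>] (0 : ℝ),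
      ENNReal.ofReal (c * e ^ (s - d)) ≤ volume (euclNbhd A e) / ENNReal.ofReal (e ^ (2 - s)) := by
    filter_upwards [hA, self_mem_nhdsWithin] with e hle (he : 0 < e)
    exact (ofReal_mul_rpow_div_ofReal_rpow he).symm.trans_le (ENNReal.div_le_div_right hle _)
  have hlim : Tendsto (fun e : ℝ => ENNReal.ofReal (c * e ^ (s - d))) (𝓝[>] 0) (𝓝 ⊤) :=
    ENNReal.tendsto_ofReal_atTop.comp
      ((tendsto_rpow_neg_nhdsGT_zero (sub_neg.2 hs)).const_mul_atTop hc)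
  exact top_le_iff.1 (hlim.liminf_eq.symm.trans_le (liminf_le_liminf hbound))

lemma lowerMinkowskiContent_le_upperMinkowskiContent (A : Set (ℝ × ℝ)) (s : ℝ) :
    lowerMinkowskiContent A s ≤ upperMinkowskiContent A s :=
  liminf_le_limsup

lemma csInf_eq_of_Ioi_subset_of_subset_Ici {S : Set ℝ} {d : ℝ} (hIoi : Ioi d ⊆ S)
    (hIci : S ⊆ Ici d) : sInf S = d :=
  le_antisymm ((csInf_le_csInf ⟨d, hIci⟩ nonempty_Ioi hIoi).trans_eq csInf_Ioi)
    (le_csInf (nonempty_Ioi.mono hIoi) hIci)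

theorem boxDim_eq_of_volume_euclNbhd_bounds {A : Set (ℝ × ℝ)} {c C d : ℝ} (hd : 0 ≤ d)
    (hc : 0 < c)
    (hlower : ∀ᶠ e in 𝓝[>] 0, ENNReal.ofReal (c * e ^ (2 - d)) ≤ volume (euclNbhd A e))
    (hupper : ∀ᶠ e in 𝓝[>] 0, volume (euclNbhd A e) ≤ ENNReal.ofReal (C * e ^ (2 - d))) :
    lowerBoxDim A = d ∧ upperBoxDim A = d := by
  have hzero (s : ℝ) (hs : d < s) := upperMinkowskiContent_eq_zero_of_volume_le hs hupper
  have htop (s : ℝ) (hs : s < d) := lowerMinkowskiContent_eq_top_of_le_volume hc hs hlower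
  have hle := lowerMinkowskiContent_le_upperMinkowskiContent A
  constructor <;> refine csInf_eq_of_Ioi_subset_of_subset_Ici ?_ ?_
  · exact fun s hs => ⟨hd.trans hs.le, nonpos_iff_eq_zero.1 ((hle s).trans (hzero s hs).le)⟩
  · exact fun s hs => mem_Ici.2 <| not_lt.1 fun hsd => by simp [htop s hsd] at hs
  · exact fun s hs => ⟨hd.trans hs.le, hzero s hs⟩
  · exact fun s hs => mem_Ici.2 <| not_lt.1 fun hsd => by
      simp [top_le_iff.1 (htop s hsd ▸ hle s)] at hs

noncomputable def polarCurve (f : ℝ → ℝ) (ψ : ℝ) : ℝ × ℝ := (f ψ * cos ψ, f ψ * sin ψ)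

lemma exists_eq_polar (P : ℝ × ℝ) :
    ∃ β, P = (√(P.1 ^ 2 + P.2 ^ 2) * cos β, √(P.1 ^ 2 + P.2 ^ 2) * sin β) := by
  have hnorm : ‖(⟨P.1, P.2⟩ : ℂ)‖ = √(P.1 ^ 2 + P.2 ^ 2) := by
    simp [Complex.norm_def, Complex.normSq_apply, sq]
  exact ⟨Complex.arg ⟨P.1, P.2⟩, Prod.ext (hnorm ▸ Complex.norm_mul_cos_arg _).symm
    (hnorm ▸ Complex.norm_mul_sin_arg _).symm⟩

lemma sqrt_sub_polar_same_angle (r s β : ℝ) :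
    √((r * cos β - s * cos β) ^ 2 + (r * sin β - s * sin β) ^ 2) = |r - s| := by
  rw [← sqrt_sq_eq_abs]
  congr 1
  linear_combination (r - s) ^ 2 * sin_sq_add_cos_sq β

lemma exists_abs_sub_lt_of_sub_succ_lt {g : ℕ → ℝ} {x ρ e : ℝ} (he : 0 < e) (hx : x < ρ)
    (h0 : ρ ≤ g 0) (hsmall : ∃ k, g k < x + e)
    (hstep : ∀ k, g (k + 1) < ρ → g k - g (k + 1) < e) : ∃ k, |g k - x| < e := by
  classical
  refine ⟨Nat.find hsmall, abs_sub_lt_iff.2 ⟨by linarith [Nat.find_spec hsmall], ?_⟩⟩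
  by_contra! hlow
  rcases hk : Nat.find hsmall with _ | j
  · linarith [hk ▸ hlow]
  · have hj : x + e ≤ g j := not_lt.1 (Nat.find_min hsmall (by omega))
    rw [hk] at hlow
    linarith [hstep j (by linarith)]

lemma mem_euclNbhd_polarCurve_image {f : ℝ → ℝ} {φ₀ a ρ e : ℝ} (he : 0 < e)
    (hlim : Tendsto f atTop (𝓝 0)) (ha : φ₀ ≤ a) (hρ : ∀ ψ ∈ Icc φ₀ (a + 2 * π), ρ ≤ f ψ)
    (hstep : ∀ ψ ≥ a, f ψ - f (ψ + 2 * π) < e) {P : ℝ × ℝ} (hP : √(P.1 ^ 2 + P.2 ^ 2) < ρ) :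
    P ∈ euclNbhd (polarCurve f '' Ici φ₀) e := by
  obtain ⟨β, hβ⟩ := exists_eq_polar P
  have hr := sqrt_nonneg (P.1 ^ 2 + P.2 ^ 2)
  generalize √(P.1 ^ 2 + P.2 ^ 2) = r at hr hP hβ
  subst hβ
  set ψ₀ := toIcoMod two_pi_pos φ₀ β
  have hψ₀ : ψ₀ = β - toIcoDiv two_pi_pos φ₀ β * (2 * π) := by
    linarith [self_sub_toIcoMod_eq_mul two_pi_pos φ₀ β]
  have hψ₀_mem : ψ₀ ∈ Ico φ₀ (φ₀ + 2 * π) := toIcoMod_mem_Ico _ _ _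
  set ψ : ℕ → ℝ := fun k => ψ₀ + k * (2 * π)
  have hψ_succ (k : ℕ) : ψ (k + 1) = ψ k + 2 * π := by simp only [ψ]; push_cast; ring
  have hψ_ge (k : ℕ) : φ₀ ≤ ψ k := by
    simp only [ψ]; nlinarith [hψ₀_mem.1, pi_pos, k.cast_nonneg (α := ℝ)]
  have hψ_top : Tendsto ψ atTop atTop :=
    tendsto_atTop_add_const_left _ _ (tendsto_natCast_atTop_atTop.atTop_mul_const two_pi_pos)
  obtain ⟨k, hk⟩ := exists_abs_sub_lt_of_sub_succ_lt (g := f ∘ ψ) he hP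
    (hρ _ ⟨hψ_ge 0, by simp only [ψ, Nat.cast_zero, zero_mul, add_zero]; linarith [hψ₀_mem.2]⟩)
    ((hlim.comp hψ_top).eventually (gt_mem_nhds (by positivity))).exists
    fun k hk => by
      have hψ_gt : a < ψ k := by
        by_contra! hle
        exact (hk.trans_le (hρ _ ⟨hψ_ge _, by rw [hψ_succ]; linarith⟩)).false
      simpa only [Function.comp, hψ_succ] using hstep (ψ k) hψ_gt.le
  refine ⟨polarCurve f (ψ k), mem_image_of_mem _ (hψ_ge k), ?_⟩
  have hcos' : cos (ψ k) = cos β := by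
    rw [cos_add_nat_mul_two_pi, hψ₀, cos_sub_int_mul_two_pi]
  have hsin' : sin (ψ k) = sin β := by
    rw [sin_add_nat_mul_two_pi, hψ₀, sin_sub_int_mul_two_pi]
  rw [polarCurve, hcos', hsin', sqrt_sub_polar_same_angle, abs_sub_comm]
  exact hk

lemma volume_ball_prod (x : ℝ × ℝ) (r : ℝ) :
    volume (ball x r) = ENNReal.ofReal (2 * r) * ENNReal.ofReal (2 * r) := by
  rw [← ball_prod_same, Measure.volume_eq_prod, Measure.prod_prod, Real.volume_ball,
    Real.volume_ball]

lemma volume_closedBall_prod (x : ℝ × ℝ) (r : ℝ) :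
    volume (closedBall x r) = ENNReal.ofReal (2 * r) * ENNReal.ofReal (2 * r) := by
  rw [← closedBall_prod_same, Measure.volume_eq_prod, Measure.prod_prod, Real.volume_closedBall,
    Real.volume_closedBall]

lemma sqrt_sq_add_sq_lt_of_mem_ball {P : ℝ × ℝ} {ρ : ℝ} (hP : P ∈ ball (0 : ℝ × ℝ) (ρ / 2)) :
    √(P.1 ^ 2 + P.2 ^ 2) < ρ := by
  rw [mem_ball_zero_iff, Prod.norm_def, max_lt_iff, Real.norm_eq_abs, Real.norm_eq_abs] at hP
  rw [sqrt_lt' (by linarith [abs_nonneg P.1])]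
  nlinarith [sq_abs P.1, sq_abs P.2, abs_nonneg P.1, abs_nonneg P.2]

lemma sq_le_volume_euclNbhd_polarCurve_image {f : ℝ → ℝ} {φ₀ a ρ e : ℝ} (he : 0 < e)
    (hlim : Tendsto f atTop (𝓝 0)) (ha : φ₀ ≤ a) (hρ0 : 0 ≤ ρ)
    (hρ : ∀ ψ ∈ Icc φ₀ (a + 2 * π), ρ ≤ f ψ) (hstep : ∀ ψ ≥ a, f ψ - f (ψ + 2 * π) < e) :
    ENNReal.ofReal (ρ ^ 2) ≤ volume (euclNbhd (polarCurve f '' Ici φ₀) e) :=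
  calc ENNReal.ofReal (ρ ^ 2) = volume (ball (0 : ℝ × ℝ) (ρ / 2)) := by
        rw [volume_ball_prod, ← ENNReal.ofReal_mul (by positivity)]; ring_nf
    _ ≤ _ := measure_mono fun _ hP => mem_euclNbhd_polarCurve_image he hlim ha hρ hstep
        (sqrt_sq_add_sq_lt_of_mem_ball hP)

lemma abs_sub_le_of_abs_derivWithin_le {f : ℝ → ℝ} {s : Set ℝ} {a b B : ℝ}
    (hf : DifferentiableOn ℝ f s) (hab : a ≤ b) (hs : Icc a b ⊆ s)
    (hB : ∀ x ∈ Icc a b, |derivWithin f s x| ≤ B) : |f b - f a| ≤ B * (b - a) := by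
  simpa [abs_of_nonneg (sub_nonneg.2 hab)] using
    (convex_Icc a b).norm_image_sub_le_of_norm_hasDerivWithin_le
      (fun x hx => (hf x (hs hx)).hasDerivWithinAt.mono hs) hB (left_mem_Icc.2 hab)
      (right_mem_Icc.2 hab)

lemma sub_add_two_pi_le_of_abs_derivWithin_le {f : ℝ → ℝ} {α φ₀ M b ψ : ℝ} (hα : 0 ≤ α)
    (hM : 0 ≤ M) (hb : 0 < b) (hbψ : b ≤ ψ) (hφ₀ψ : φ₀ ≤ ψ) (hf : DifferentiableOn ℝ f (Ici φ₀))
    (hf' : ∀ ψ ≥ φ₀, |derivWithin f (Ici φ₀) ψ| ≤ M * ψ ^ (-α - 1)) :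
    f ψ - f (ψ + 2 * π) ≤ 2 * π * M * b ^ (-α - 1) := by
  have hbound : ∀ x ∈ Icc ψ (ψ + 2 * π), |derivWithin f (Ici φ₀) x| ≤ M * b ^ (-α - 1) :=
    fun x hx => (hf' x (hφ₀ψ.trans hx.1)).trans <| mul_le_mul_of_nonneg_left
      (rpow_le_rpow_of_nonpos hb (hbψ.trans hx.1) (by linarith)) hM
  have := abs_sub_le_of_abs_derivWithin_le hf (by linarith [pi_pos])
    (fun x hx => mem_Ici.2 (hφ₀ψ.trans hx.1)) hbound
  rw [abs_sub_comm] at this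
  linarith [le_abs_self (f ψ - f (ψ + 2 * π))]

lemma eventually_le_volume_euclNbhd_polarCurve {f : ℝ → ℝ} {α φ₀ m M : ℝ} (hα : 0 < α)
    (hφ₀ : 0 < φ₀) (hm : 0 < m) (hM : 0 < M) (hf : DifferentiableOn ℝ f (Ici φ₀))
    (hf_lim : Tendsto f atTop (𝓝 0)) (hf_lb : ∀ ψ ≥ φ₀, m * ψ ^ (-α) ≤ f ψ)
    (hf' : ∀ ψ ≥ φ₀, |derivWithin f (Ici φ₀) ψ| ≤ M * ψ ^ (-α - 1)) :
    ∃ c > 0, ∀ᶠ e in 𝓝[>] 0,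
      ENNReal.ofReal (c * e ^ (2 - 2 / (1 + α))) ≤
        volume (euclNbhd (polarCurve f '' Ici φ₀) e) := by
  set A := (4 * π * M) ^ (1 / (1 + α))
  have hA : 0 < A := by positivity
  set L := A + φ₀ + 2 * π
  refine ⟨(m * L ^ (-α)) ^ 2, by positivity, ?_⟩
  filter_upwards [Ioo_mem_nhdsGT one_pos] with e ⟨he0, he1⟩
  set T := e ^ (-(1 / (1 + α)))
  have hT : 1 ≤ T := one_le_rpow_of_pos_of_le_one_of_nonpos he0 he1.le (by
    have : 0 < 1 / (1 + α) := by positivity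
    linarith)
  -- `a` is chosen so that `2 * π * M * a ^ (-α - 1) ≤ e / 2`
  set a := A * T + φ₀
  have hATpos : 0 < A * T := by positivity
  have hφ₀a : φ₀ ≤ a := by linarith
  have hAT : (A * T) ^ (-α - 1) = e / (4 * π * M) := by
    rw [mul_rpow hA.le (by positivity), ← rpow_mul (by positivity), ← rpow_mul he0.le,
      show 1 / (1 + α) * (-α - 1) = -1 by field_simp; ring,
      show -(1 / (1 + α)) * (-α - 1) = 1 by field_simp; ring, rpow_neg_one, rpow_one]
    field_simp
  have hstep : ∀ ψ ≥ a, f ψ - f (ψ + 2 * π) < e := fun ψ hψ => by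
    have := sub_add_two_pi_le_of_abs_derivWithin_le hα.le hM.le hATpos (by linarith)
      (hφ₀a.trans hψ) hf hf'
    rw [hAT, show 2 * π * M * (e / (4 * π * M)) = e / 2 by field_simp; ring] at this
    linarith
  have hρ : ∀ ψ ∈ Icc φ₀ (a + 2 * π), m * (a + 2 * π) ^ (-α) ≤ f ψ := fun ψ hψ =>
    (mul_le_mul_of_nonneg_left (rpow_le_rpow_of_nonpos (by linarith [hψ.1]) hψ.2 (by linarith))
      hm.le).trans (hf_lb ψ hψ.1)
  refine le_trans (ENNReal.ofReal_le_ofReal ?_)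
    (sq_le_volume_euclNbhd_polarCurve_image he0 hf_lim hφ₀a (by positivity) hρ hstep)
  have hLT : (L * T) ^ (-α) ≤ (a + 2 * π) ^ (-α) :=
    rpow_le_rpow_of_nonpos (by positivity) (by nlinarith [pi_pos]) (by linarith)
  have hLT' : (L * T) ^ (-α) = L ^ (-α) * e ^ (α / (1 + α)) := by
    rw [mul_rpow (by positivity) (by positivity), ← rpow_mul he0.le]
    congr 2
    ring
  have he_exp : e ^ (2 - 2 / (1 + α)) = (e ^ (α / (1 + α))) ^ 2 := by
    rw [← rpow_natCast, ← rpow_mul he0.le]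
    congr 1
    field_simp
    ring
  calc (m * L ^ (-α)) ^ 2 * e ^ (2 - 2 / (1 + α)) = (m * (L * T) ^ (-α)) ^ 2 := by
        rw [he_exp, hLT']; ring
    _ ≤ (m * (a + 2 * π) ^ (-α)) ^ 2 := by gcongr

-- `ball`, `closedBall` and `thickening` in `ℝ × ℝ` refer to the sup metric.
lemma euclNbhd_subset_thickening (A : Set (ℝ × ℝ)) (e : ℝ) : euclNbhd A e ⊆ thickening e A := by
  rintro y ⟨a, ha, hya⟩
  refine mem_thickening_iff.2 ⟨a, ha, lt_of_le_of_lt ?_ hya⟩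
  rw [Prod.dist_eq, Real.dist_eq, Real.dist_eq]
  exact max_le (abs_le_sqrt (by nlinarith)) (abs_le_sqrt (by nlinarith))

lemma volume_thickening_image_Icc_le {η : ℝ → ℝ × ℝ} {K : NNReal} {a b e : ℝ} (he : 0 < e)
    (hη : LipschitzOnWith K η (Icc a b)) :
    volume (thickening e (η '' Icc a b)) ≤
      ENNReal.ofReal ((⌈(b - a) / e⌉₊ + 1) * (2 * ((K + 1) * e)) ^ 2) := by
  set N := ⌈(b - a) / e⌉₊
  have hcover : thickening e (η '' Icc a b) ⊆
      ⋃ i ∈ Finset.range (N + 1), closedBall (η (a + i * e)) ((K + 1) * e) := by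
    rintro y hy
    obtain ⟨_, ⟨u, hu, rfl⟩, hyu⟩ := mem_thickening_iff.1 hy
    set i := ⌊(u - a) / e⌋₊
    have hi : a + i * e ∈ Icc a u := by
      have := Nat.floor_le (div_nonneg (sub_nonneg.2 hu.1) he.le)
      constructor
      · exact le_add_of_nonneg_right (by positivity)
      · rw [le_div_iff₀ he] at this; linarith
    have hi' : u - (a + i * e) < e := by
      have := Nat.lt_floor_add_one ((u - a) / e)
      rw [div_lt_iff₀ he] at this; linarith
    have hiN : i < N + 1 := Nat.lt_succ_of_le <|
      (Nat.floor_le_floor (by gcongr; exact hu.2)).trans (Nat.floor_le_ceil _)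
    refine mem_iUnion₂.2 ⟨i, Finset.mem_range.2 hiN, mem_closedBall.2 ?_⟩
    have hLip := hη.dist_le_mul u hu _ ⟨hi.1, hi.2.trans hu.2⟩
    rw [Real.dist_eq, abs_of_nonneg (by linarith [hi.2])] at hLip
    calc dist y (η (a + i * e)) ≤ dist y (η u) + dist (η u) (η (a + i * e)) := dist_triangle _ _ _
      _ ≤ e + K * e := by gcongr; exact hLip.trans (by gcongr)
      _ = (K + 1) * e := by ring
  calc volume (thickening e (η '' Icc a b))
      ≤ ∑ i ∈ Finset.range (N + 1), volume (closedBall (η (a + i * e)) ((K + 1) * e)) :=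
        (measure_mono hcover).trans (measure_biUnion_finset_le _ _)
    _ = ENNReal.ofReal ((N + 1) * (2 * ((K + 1) * e)) ^ 2) := by
        simp only [volume_closedBall_prod, Finset.sum_const, Finset.card_range, nsmul_eq_mul]
        rw [← ENNReal.ofReal_mul (by positivity), ← ENNReal.ofReal_natCast,
          ← ENNReal.ofReal_mul (by positivity)]
        push_cast
        ring_nf

lemma norm_polarCurve_le (f : ℝ → ℝ) (ψ : ℝ) : ‖polarCurve f ψ‖ ≤ |f ψ| := by
  rw [polarCurve, Prod.norm_def, Real.norm_eq_abs, Real.norm_eq_abs, abs_mul, abs_mul]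
  exact max_le (mul_le_of_le_one_right (abs_nonneg _) (abs_cos_le_one ψ))
    (mul_le_of_le_one_right (abs_nonneg _) (abs_sin_le_one ψ))

lemma hasDerivWithinAt_polarCurve {f : ℝ → ℝ} {f' ψ : ℝ} {s : Set ℝ}
    (hf : HasDerivWithinAt f f' s ψ) :
    HasDerivWithinAt (polarCurve f) (f' * cos ψ - f ψ * sin ψ, f' * sin ψ + f ψ * cos ψ) s ψ := by
  have hcos := (hasDerivAt_cos ψ).hasDerivWithinAt (s := s)
  have hsin := (hasDerivAt_sin ψ).hasDerivWithinAt (s := s)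
  convert (hf.mul hcos).prodMk (hf.mul hsin) using 2
  · rfl
  · ring

lemma norm_polarCurve_deriv_le (f' r ψ : ℝ) :
    ‖(f' * cos ψ - r * sin ψ, f' * sin ψ + r * cos ψ)‖ ≤ |f'| + |r| := by
  have hc := abs_cos_le_one ψ
  have hs := abs_sin_le_one ψ
  rw [Prod.norm_def, Real.norm_eq_abs, Real.norm_eq_abs]
  refine max_le ((abs_sub _ _).trans ?_) ((abs_add_le _ _).trans ?_) <;>
  · rw [abs_mul, abs_mul]
    gcongr <;> exact mul_le_of_le_one_right (abs_nonneg _) ‹_›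

lemma lipschitzOnWith_polarCurve_comp_rpow {f : ℝ → ℝ} {α φ₀ m' M : ℝ} (hα : α < 1)
    (hφ₀ : 0 < φ₀) (hM : 0 ≤ M) (hf : DifferentiableOn ℝ f (Ici φ₀))
    (hf_ub : ∀ ψ ≥ φ₀, |f ψ| ≤ m' * ψ ^ (-α))
    (hf' : ∀ ψ ≥ φ₀, |derivWithin f (Ici φ₀) ψ| ≤ M * ψ ^ (-α - 1)) :
    LipschitzOnWith ((1 - α)⁻¹ * (M / φ₀ + m')).toNNReal
      (polarCurve f ∘ (· ^ (1 - α)⁻¹)) (Ici (φ₀ ^ (1 - α))) := by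
  set p := (1 - α)⁻¹
  have hp : 0 < p := inv_pos.2 (sub_pos.2 hα)
  have hu0 {u : ℝ} (hu : u ∈ Ici (φ₀ ^ (1 - α))) : 0 < u := (rpow_pos_of_pos hφ₀ _).trans_le hu
  have hmaps : MapsTo (· ^ p) (Ici (φ₀ ^ (1 - α))) (Ici φ₀) := fun u hu => by
    simpa [p, rpow_rpow_inv hφ₀.le (sub_pos.2 hα).ne'] using rpow_le_rpow (by positivity) hu hp.le
  set D := derivWithin f (Ici φ₀)
  refine (convex_Ici _).lipschitzOnWith_of_nnnorm_hasDerivWithin_le (fun u hu =>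
    (hasDerivWithinAt_polarCurve ((hf _ (hmaps hu)).hasDerivWithinAt)).scomp u
      (hasDerivAt_rpow_const (Or.inl (hu0 hu).ne')).hasDerivWithinAt hmaps) fun u hu => ?_
  rw [← norm_toNNReal]
  refine Real.toNNReal_le_toNNReal ?_
  set ψ := u ^ p
  have hψ : φ₀ ≤ ψ := hmaps hu
  have hψ0 : 0 < ψ := hφ₀.trans_le hψ
  have hspeed : u ^ (p - 1) = ψ ^ α := by
    rw [← rpow_mul (hu0 hu).le]
    congr 1
    linear_combination inv_mul_cancel₀ (sub_pos.2 hα).ne'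
  calc ‖(p * u ^ (p - 1)) • (D ψ * cos ψ - f ψ * sin ψ, D ψ * sin ψ + f ψ * cos ψ)‖
      ≤ p * ψ ^ α * (|D ψ| + |f ψ|) := by
        rw [norm_smul, Real.norm_eq_abs, abs_of_pos (mul_pos hp (rpow_pos_of_pos (hu0 hu) _)),
          hspeed]
        gcongr
        exact norm_polarCurve_deriv_le _ _ _
    _ ≤ p * ψ ^ α * (M * ψ ^ (-α - 1) + m' * ψ ^ (-α)) := by
        gcongr
        exacts [hf' ψ hψ, hf_ub ψ hψ]
    _ = p * (M * ψ⁻¹ + m') := by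
        have h1 : ψ ^ α * ψ ^ (-α - 1) = ψ⁻¹ := by
          rw [← rpow_add hψ0, show α + (-α - 1) = -1 by ring, rpow_neg_one]
        have h2 : ψ ^ α * ψ ^ (-α) = 1 := by rw [← rpow_add hψ0, add_neg_cancel, rpow_zero]
        linear_combination (p * M) * h1 + (p * m') * h2
    _ ≤ p * (M / φ₀ + m') := by
        gcongr
        rw [div_eq_mul_inv]
        gcongr

lemma polarCurve_image_Ici_subset {f : ℝ → ℝ} {α φ₀ Ψ : ℝ} (hα : α < 1) (hφ₀ : 0 < φ₀) :
    polarCurve f '' Ici φ₀ ⊆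
      (polarCurve f ∘ (· ^ (1 - α)⁻¹)) '' Icc (φ₀ ^ (1 - α)) (Ψ ^ (1 - α)) ∪
        polarCurve f '' Ici Ψ := by
  rintro _ ⟨ψ, hψ, rfl⟩
  by_cases hψΨ : ψ ≤ Ψ
  · have hψ0 : 0 ≤ ψ := hφ₀.le.trans hψ
    refine Or.inl ⟨ψ ^ (1 - α), ⟨?_, ?_⟩, by simp [rpow_rpow_inv hψ0 (sub_pos.2 hα).ne']⟩
    · exact rpow_le_rpow hφ₀.le hψ (sub_pos.2 hα).le
    · exact rpow_le_rpow hψ0 hψΨ (sub_pos.2 hα).le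
  · exact Or.inr ⟨ψ, le_of_not_ge hψΨ, rfl⟩

lemma polarCurve_image_Ici_subset_closedBall {f : ℝ → ℝ} {α φ₀ m' Ψ : ℝ} (hα : 0 ≤ α)
    (hφ₀ : 0 < φ₀) (hm' : 0 ≤ m') (hΨ : φ₀ ≤ Ψ) (hf_ub : ∀ ψ ≥ φ₀, |f ψ| ≤ m' * ψ ^ (-α)) :
    polarCurve f '' Ici Ψ ⊆ closedBall 0 (m' * Ψ ^ (-α)) := by
  rintro _ ⟨ψ, hψ, rfl⟩
  rw [mem_closedBall_zero_iff]
  calc ‖polarCurve f ψ‖ ≤ |f ψ| := norm_polarCurve_le f ψ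
    _ ≤ m' * ψ ^ (-α) := hf_ub ψ (hΨ.trans hψ)
    _ ≤ m' * Ψ ^ (-α) :=
        mul_le_mul_of_nonneg_left (rpow_le_rpow_of_nonpos (hφ₀.trans_le hΨ) hψ (neg_nonpos.2 hα))
          hm'

lemma volume_euclNbhd_polarCurve_image_le {f : ℝ → ℝ} {K : NNReal} {α φ₀ m' Ψ e : ℝ}
    (hα0 : 0 ≤ α) (hα1 : α < 1) (hφ₀ : 0 < φ₀) (hm' : 0 ≤ m') (he : 0 < e) (hΨ : φ₀ ≤ Ψ)
    (hf_ub : ∀ ψ ≥ φ₀, |f ψ| ≤ m' * ψ ^ (-α))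
    (hK : LipschitzOnWith K (polarCurve f ∘ (· ^ (1 - α)⁻¹)) (Ici (φ₀ ^ (1 - α)))) :
    volume (euclNbhd (polarCurve f '' Ici φ₀) e) ≤
      ENNReal.ofReal ((⌈(Ψ ^ (1 - α) - φ₀ ^ (1 - α)) / e⌉₊ + 1) * (2 * ((K + 1) * e)) ^ 2) +
        ENNReal.ofReal ((2 * (e + m' * Ψ ^ (-α))) ^ 2) :=
  calc volume (euclNbhd (polarCurve f '' Ici φ₀) e)
      ≤ volume (thickening e ((polarCurve f ∘ (· ^ (1 - α)⁻¹)) '' Icc (φ₀ ^ (1 - α)) (Ψ ^ (1 - α)))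
          ∪ thickening e (closedBall 0 (m' * Ψ ^ (-α)))) := by
        refine measure_mono ((euclNbhd_subset_thickening _ _).trans ?_)
        rw [← thickening_union]
        exact thickening_subset_of_subset _ ((polarCurve_image_Ici_subset hα1 hφ₀).trans
          (union_subset_union_right _
            (polarCurve_image_Ici_subset_closedBall hα0 hφ₀ hm' hΨ hf_ub)))
    _ ≤ _ := by
        refine (measure_union_le _ _).trans (add_le_add ?_ ?_)
        · exact volume_thickening_image_Icc_le he (hK.mono Icc_subset_Ici_self)
        · have hR : 0 ≤ m' * Ψ ^ (-α) := mul_nonneg hm' (rpow_nonneg (hφ₀.le.trans hΨ) _)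
          rw [thickening_closedBall he hR, volume_ball_prod, ← ENNReal.ofReal_mul (by positivity),
            sq]

lemma eventually_volume_euclNbhd_polarCurve_le {f : ℝ → ℝ} {α φ₀ m' M : ℝ} (hα0 : 0 < α)
    (hα1 : α < 1) (hφ₀ : 0 < φ₀) (hm' : 0 ≤ m') (hM : 0 ≤ M) (hf : DifferentiableOn ℝ f (Ici φ₀))
    (hf_ub : ∀ ψ ≥ φ₀, |f ψ| ≤ m' * ψ ^ (-α))
    (hf' : ∀ ψ ≥ φ₀, |derivWithin f (Ici φ₀) ψ| ≤ M * ψ ^ (-α - 1)) :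
    ∃ C, ∀ᶠ e in 𝓝[>] 0,
      volume (euclNbhd (polarCurve f '' Ici φ₀) e) ≤
        ENNReal.ofReal (C * e ^ (2 - 2 / (1 + α))) := by
  set K := ((1 - α)⁻¹ * (M / φ₀ + m')).toNNReal
  have hK := lipschitzOnWith_polarCurve_comp_rpow hα1 hφ₀ hM hf hf_ub hf'
  refine ⟨4 * (m' + 1) ^ 2 + 12 * (K + 1) ^ 2, ?_⟩
  have hΨ_top : Tendsto (fun e : ℝ => e ^ (-(1 / (1 + α)))) (𝓝[>] 0) atTop :=
    tendsto_rpow_neg_nhdsGT_zero (by simp only [one_div, neg_lt_zero, inv_pos]; linarith)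
  filter_upwards [Ioo_mem_nhdsGT one_pos, hΨ_top.eventually_ge_atTop φ₀] with e ⟨he0, he1⟩ hΨ
  refine (volume_euclNbhd_polarCurve_image_le hα0.le hα1 hφ₀ hm' he0 hΨ hf_ub hK).trans ?_
  rw [← ENNReal.ofReal_add (by positivity) (by positivity)]
  refine ENNReal.ofReal_le_ofReal ?_
  set Ψ := e ^ (-(1 / (1 + α)))
  set U := Ψ ^ (1 - α)
  set N := ⌈(U - φ₀ ^ (1 - α)) / e⌉₊
  set x := e ^ (α / (1 + α))
  have hΨα : Ψ ^ (-α) = x := by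
    rw [← rpow_mul he0.le]; congr 1; ring
  have hUe : U * e = x * x := by
    simp only [U, Ψ, x]
    rw [← rpow_mul he0.le, ← rpow_add_one he0.ne', ← rpow_add he0]
    congr 1
    field_simp
    ring
  have he_le : e ≤ x := by
    simpa using rpow_le_rpow_of_exponent_ge he0 he1.le
      (show α / (1 + α) ≤ 1 by rw [div_le_one (by linarith)]; linarith)
  have hexp : e ^ (2 - 2 / (1 + α)) = x * x := by
    rw [← rpow_add he0]; congr 1; field_simp; ring
  have hN : (N : ℝ) ≤ U / e + 1 := by
    have : N ≤ ⌈U / e⌉₊ := Nat.ceil_mono (by gcongr; linarith [rpow_pos_of_pos hφ₀ (1 - α)])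
    have : (N : ℝ) ≤ ⌈U / e⌉₊ := by exact_mod_cast this
    linarith [Nat.ceil_lt_add_one (show 0 ≤ U / e by positivity)]
  have hcurve : (N + 1) * (2 * ((K + 1) * e)) ^ 2 ≤ 12 * (K + 1) ^ 2 * (x * x) :=
    calc (N + 1) * (2 * ((K + 1) * e)) ^ 2 ≤ (U / e + 2) * (2 * ((K + 1) * e)) ^ 2 :=
          mul_le_mul_of_nonneg_right (by linarith) (by positivity)
      _ = 4 * (K + 1) ^ 2 * (U * e + 2 * (e * e)) := by field_simp; ring
      _ ≤ 4 * (K + 1) ^ 2 * (x * x + 2 * (x * x)) := by rw [hUe]; gcongr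
      _ = 12 * (K + 1) ^ 2 * (x * x) := by ring
  have hdisc : (2 * (e + m' * x)) ^ 2 ≤ 4 * (m' + 1) ^ 2 * (x * x) :=
    calc (2 * (e + m' * x)) ^ 2 ≤ (2 * ((m' + 1) * x)) ^ 2 := by gcongr; linarith
      _ = 4 * (m' + 1) ^ 2 * (x * x) := by ring
  rw [hexp, hΨα]
  linarith

open Asymptotics in
theorem box_dimension_of_wavy_spiral_general
    (α : ℝ) (hα : α ∈ Set.Ioo (0 : ℝ) 1)
    (φ₀ : ℝ) (hφ₀ : 0 < φ₀)
    -- the spiral r = f(φ)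
    (f : ℝ → ℝ)
    (hf_pos : ∀ ψ ≥ φ₀, 0 < f ψ)
    (hf_diff : DifferentiableOn ℝ f (Set.Ici φ₀))
    (hf_lim : Filter.Tendsto f Filter.atTop (nhds 0))
    -- constants
    (m m' M : ℝ) (hm : 0 < m) (hm' : 0 < m') (hM : 0 < M)
    (hf_bound : ∀ ψ ≥ φ₀, m * ψ ^ (-α) ≤ f ψ ∧ f ψ ≤ m' * ψ ^ (-α))
    (hf'_bound : ∀ ψ ≥ φ₀, |derivWithin f (Set.Ici φ₀) ψ| ≤ M * ψ ^ (-α - 1))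
    (Γ' : Set (ℝ × ℝ))
    (hΓ' : Γ' = {P : ℝ × ℝ | ∃ ψ ≥ φ₀, P = (f ψ * Real.cos ψ, f ψ * Real.sin ψ)}) :
    lowerBoxDim Γ' = 2 / (1 + α) ∧ upperBoxDim Γ' = 2 / (1 + α) := by
  obtain ⟨hα0, hα1⟩ := hα
  have hΓ : Γ' = polarCurve f '' Ici φ₀ := by
    rw [hΓ']
    ext P
    simp [polarCurve, eq_comm]
  obtain ⟨c, hc, hlower⟩ := eventually_le_volume_euclNbhd_polarCurve hα0 hφ₀ hm hM hf_diff
    hf_lim (fun ψ hψ => (hf_bound ψ hψ).1) hf'_bound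
  obtain ⟨C, hupper⟩ := eventually_volume_euclNbhd_polarCurve_le hα0 hα1 hφ₀ hm'.le hM.le hf_diff
    (fun ψ hψ => (abs_of_pos (hf_pos ψ hψ)).trans_le (hf_bound ψ hψ).2) hf'_bound
  rw [hΓ]
  exact boxDim_eq_of_volume_euclNbhd_bounds (by positivity) hc hlower hupper

open Asymptotics in
/-- Box dimension of a wavy spiral (Theorem `biliplema`). -/
theorem box_dimension_of_wavy_spiral
    (t₀ α ε : ℝ) (ht₀ : 0 < t₀) (hα : α ∈ Set.Ioo (0 : ℝ) 1) (hε : 0 < ε)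
    (r : ℝ → ℝ)
    (hr_pos : ∀ s ≥ t₀, 0 < r s)
    (hr_smooth : ContDiffOn ℝ 1 r (Set.Ici t₀))
    (hr'_t₀ : derivWithin r (Set.Ici t₀) t₀ ≤ 0)
    -- the inductively defined sequence (tₙ) of Definition `def_wavy_function`
    (t : ℕ → ℝ) (ht_init : t 0 = t₀)
    (ht_odd : ∀ k : ℕ,
      {s : ℝ | t (2 * k) < s ∧ 0 < derivWithin r (Set.Ici t₀) s}.Nonempty ∧
      t (2 * k + 1) = sInf {s : ℝ | t (2 * k) < s ∧ 0 < derivWithin r (Set.Ici t₀) s})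
    (ht_even : ∀ k : ℕ,
      {s : ℝ | t (2 * k + 1) < s ∧ r s = r (t (2 * k + 1))}.Nonempty ∧
      t (2 * k + 2) = sInf {s : ℝ | t (2 * k + 1) < s ∧ r s = r (t (2 * k + 1))})
    -- waviness condition (i), (ii), (iii)
    (ht_mono : StrictMono t)
    (ht_top : Filter.Tendsto t Filter.atTop Filter.atTop)
    (ht_gap : ∀ k : ℕ, ε ≤ t (2 * k + 1) - t (2 * k))
    (ht_osc : (fun k : ℕ =>
        sSup (r '' Set.Icc (t (2 * k + 1)) (t (2 * k + 2))) -
        sInf (r '' Set.Icc (t (2 * k + 1)) (t (2 * k + 2))))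
      =o[Filter.atTop] fun k : ℕ => t (2 * k + 1) ^ (-α - 1))
    -- the angle function φ
    (φ₀ : ℝ) (hφ₀ : 0 < φ₀)
    (φ : ℝ → ℝ)
    (hφ_mono : StrictMonoOn φ (Set.Ici t₀))
    (hφ_smooth : ContDiffOn ℝ 1 φ (Set.Ici t₀))
    (hφ_init : φ t₀ = φ₀)
    (hφ_surj : φ '' Set.Ici t₀ = Set.Ici φ₀)
    (φb : ℝ)
    (hφ_asym : Filter.Tendsto (fun s => (φ s - φb) - (s - t₀)) Filter.atTop (nhds 0))
    -- the spiral r = f(φ)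
    (f : ℝ → ℝ)
    (hf_pos : ∀ ψ ≥ φ₀, 0 < f ψ)
    (hf_diff : DifferentiableOn ℝ f (Set.Ici φ₀))
    (hf_r : ∀ s ≥ t₀, f (φ s) = r s)
    (hf_lim : Filter.Tendsto f Filter.atTop (nhds 0))
    (hf_rad : ∀ ψ ≥ φ₀, StrictAnti (fun k : ℕ => f (ψ + 2 * (k : ℝ) * Real.pi)))
    -- constants
    (ε' θ : ℝ) (hε' : 0 < ε' ∧ ε' < ε) (hθ : θ = min ε' Real.pi)
    (m m' a' M : ℝ) (hm : 0 < m) (hm' : 0 < m') (ha' : 0 < a') (hM : 0 < M)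
    (hf_bound : ∀ ψ ≥ φ₀, m * ψ ^ (-α) ≤ f ψ ∧ f ψ ≤ m' * ψ ^ (-α))
    (hf'_bound : ∀ ψ ≥ φ₀, |derivWithin f (Set.Ici φ₀) ψ| ≤ M * ψ ^ (-α - 1))
    (hf_dec : ∀ ψ ≥ φ₀, ∀ Δ : ℝ, θ ≤ Δ → Δ ≤ 2 * Real.pi + θ →
      a' * ψ ^ (-α - 1) ≤ f ψ - f (ψ + Δ))
    (Γ' : Set (ℝ × ℝ))
    (hΓ' : Γ' = {P : ℝ × ℝ | ∃ ψ ≥ φ₀, P = (f ψ * Real.cos ψ, f ψ * Real.sin ψ)}) :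
    lowerBoxDim Γ' = 2 / (1 + α) ∧ upperBoxDim Γ' = 2 / (1 + α) :=
  box_dimension_of_wavy_spiral_general α hα φ₀ hφ₀ f hf_pos hf_diff hf_lim m m' M hm hm' hM hf_bound
    hf'_bound Γ' hΓ'
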